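/- For every n ≥ 0 and every m ≥ 0, the number of permutations of [n] containing exactly m (b-ac)-subwords, the number containing exactly m (b-ca)-subwords, the number containing exactly m (ac-b)-subwords, and the number containing exactly m (ca-b)-subwords are all equal; i.e. the four pattern statistics (b-ac), (b-ca), (ac-b), (ca-b) are equidistributed over S_n. -/
import Mathlib


/-- Number of (b-ac)-subwords of `π`: pairs of (0-based) indices `(i, j)` with
`i < j`, `j + 1 < n` and `π j < π i < π (j+1)`. -/
noncomputable def cntBdAC (n : ℕ) (π : Equiv.Perm (Fin n)) : ℕ :=
  {p : ℕ × ℕ | ∃ (hi : p.1 < n) (hj : p.2 + 1 < n),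
    p.1 < p.2 ∧ π ⟨p.2, Nat.lt_of_succ_lt hj⟩ < π ⟨p.1, hi⟩ ∧
      π ⟨p.1, hi⟩ < π ⟨p.2 + 1, hj⟩}.ncard

/-- Number of (b-ca)-subwords of `π`: pairs `(i, j)` with `i < j`, `j + 1 < n` and
`π (j+1) < π i < π j`. -/
noncomputable def cntBdCA (n : ℕ) (π : Equiv.Perm (Fin n)) : ℕ :=
  {p : ℕ × ℕ | ∃ (hi : p.1 < n) (hj : p.2 + 1 < n),
    p.1 < p.2 ∧ π ⟨p.2 + 1, hj⟩ < π ⟨p.1, hi⟩ ∧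
      π ⟨p.1, hi⟩ < π ⟨p.2, Nat.lt_of_succ_lt hj⟩}.ncard

/-- Number of (ac-b)-subwords of `π`: pairs `(i, j)` with `i + 1 < j < n` and
`π i < π j < π (i+1)`. -/
noncomputable def cntACdB (n : ℕ) (π : Equiv.Perm (Fin n)) : ℕ :=
  {p : ℕ × ℕ | ∃ (hi : p.1 + 1 < n) (hj : p.2 < n),
    p.1 + 1 < p.2 ∧ π ⟨p.1, Nat.lt_of_succ_lt hi⟩ < π ⟨p.2, hj⟩ ∧
      π ⟨p.2, hj⟩ < π ⟨p.1 + 1, hi⟩}.ncard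

/-- Number of (ca-b)-subwords of `π`: pairs `(i, j)` with `i + 1 < j < n` and
`π (i+1) < π j < π i`. -/
noncomputable def cntCAdB (n : ℕ) (π : Equiv.Perm (Fin n)) : ℕ :=
  {p : ℕ × ℕ | ∃ (hi : p.1 + 1 < n) (hj : p.2 < n),
    p.1 + 1 < p.2 ∧ π ⟨p.1 + 1, hi⟩ < π ⟨p.2, hj⟩ ∧
      π ⟨p.2, hj⟩ < π ⟨p.1, Nat.lt_of_succ_lt hi⟩}.ncard

lemma rev_eq_mk {n k : ℕ} (h : k < n) : Fin.rev ⟨k, h⟩ = ⟨n - 1 - k, by omega⟩ := by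
  ext; simp [Fin.rev]; omega

section
variable (n : ℕ) (π : Equiv.Perm (Fin n))

lemma lemA : cntBdCA n (π.trans Fin.revPerm) = cntBdAC n π := by
  unfold cntBdCA cntBdAC
  congr 1
  ext p
  simp only [Set.mem_setOf_eq, Equiv.trans_apply, Fin.revPerm_apply, Fin.rev_lt_rev]
  tauto

lemma lemB : cntACdB n (π.trans Fin.revPerm) = cntCAdB n π := by
  unfold cntACdB cntCAdB
  congr 1
  ext p
  simp only [Set.mem_setOf_eq, Equiv.trans_apply, Fin.revPerm_apply, Fin.rev_lt_rev]
  tauto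

lemma lemC : cntCAdB n (Fin.revPerm.trans π) = cntBdAC n π := by
  unfold cntCAdB cntBdAC
  set S : Set (ℕ × ℕ) := {p : ℕ × ℕ | ∃ (hi : p.1 < n) (hj : p.2 + 1 < n),
    p.1 < p.2 ∧ π ⟨p.2, Nat.lt_of_succ_lt hj⟩ < π ⟨p.1, hi⟩ ∧
      π ⟨p.1, hi⟩ < π ⟨p.2 + 1, hj⟩} with hS
  have key : {p : ℕ × ℕ | ∃ (hi : p.1 + 1 < n) (hj : p.2 < n),
      p.1 + 1 < p.2 ∧ (Fin.revPerm.trans π) ⟨p.1 + 1, hi⟩ < (Fin.revPerm.trans π) ⟨p.2, hj⟩ ∧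
        (Fin.revPerm.trans π) ⟨p.2, hj⟩ < (Fin.revPerm.trans π) ⟨p.1, Nat.lt_of_succ_lt hi⟩}
      = (fun p : ℕ × ℕ => (n - 2 - p.2, n - 1 - p.1)) '' S := by
    ext ⟨p, q⟩
    simp only [Set.mem_setOf_eq, Set.mem_image, Equiv.trans_apply, Fin.revPerm_apply, hS,
      Prod.mk.injEq, Prod.exists]
    constructor
    · rintro ⟨hi, hj, h1, h2, h3⟩
      refine ⟨n - 1 - q, n - 2 - p, ⟨by omega, by omega, by omega, ?_, ?_⟩, by omega, by omega⟩
      · convert h2 using 3 <;> (simp [Fin.rev]; omega)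
      · convert h3 using 3 <;> (simp [Fin.rev]; omega)
    · rintro ⟨i, j, ⟨hi, hj, h1, h2, h3⟩, hp, hq⟩
      refine ⟨by omega, by omega, by omega, ?_, ?_⟩
      · convert h2 using 3 <;> (simp [Fin.rev]; omega)
      · convert h3 using 3 <;> (simp [Fin.rev]; omega)
  rw [key, Set.ncard_image_of_injOn]
  rintro ⟨a, b⟩ ⟨ha, hb, -⟩ ⟨c, d⟩ ⟨hc, hd, -⟩ h
  simp only [Prod.mk.injEq] at h ⊢
  omega

end

lemma level {n : ℕ} (f g : Equiv.Perm (Fin n) → ℕ) (h : Equiv.Perm (Fin n) ≃ Equiv.Perm (Fin n))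
    (hfg : ∀ π, g (h π) = f π) (m : ℕ) :
    {π | f π = m}.ncard = {π | g π = m}.ncard := by
  have : {π | g π = m} = h '' {π | f π = m} := by
    ext σ
    simp only [Set.mem_setOf_eq, Set.mem_image]
    constructor
    · intro hσ
      exact ⟨h.symm σ, by rw [← hfg (h.symm σ), h.apply_symm_apply]; exact hσ, h.apply_symm_apply σ⟩
    · rintro ⟨π, hπ, rfl⟩; rw [hfg]; exact hπ
  rw [this, Set.ncard_image_of_injective _ h.injective]

/-- The four pattern statistics (b-ac), (b-ca), (ac-b), (ca-b) are equidistributed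
over `S_n`. -/
theorem equidistributed_class_three (n m : ℕ) :
    {π : Equiv.Perm (Fin n) | cntBdAC n π = m}.ncard =
      {π : Equiv.Perm (Fin n) | cntBdCA n π = m}.ncard ∧
    {π : Equiv.Perm (Fin n) | cntBdAC n π = m}.ncard =
      {π : Equiv.Perm (Fin n) | cntACdB n π = m}.ncard ∧
    {π : Equiv.Perm (Fin n) | cntBdAC n π = m}.ncard =
      {π : Equiv.Perm (Fin n) | cntCAdB n π = m}.ncard := by
  have hca : {π : Equiv.Perm (Fin n) | cntBdAC n π = m}.ncard =
      {π : Equiv.Perm (Fin n) | cntCAdB n π = m}.ncard :=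
    level _ _ (Equiv.mulRight Fin.revPerm) (fun π => lemC n π) m
  refine ⟨level _ _ (Equiv.mulLeft Fin.revPerm) (fun π => lemA n π) m, ?_, hca⟩
  rw [hca]
  exact level _ _ (Equiv.mulLeft Fin.revPerm) (fun π => lemB n π) m
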